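/- Let φ be an algebraic isomorphism from a coherent configuration 𝒳 to a coherent configuration 𝒳'. Then φ(e_𝒳) = e_{𝒳'}, i.e., φ maps the twin parabolic of 𝒳 onto the twin parabolic of 𝒳'. -/

import Mathlib

open Set

universe u v

variable {Ω : Type*}

/-- The diagonal relation `1_Δ` of a set `Δ ⊆ Ω`. -/
def diagRel (Δ : Set Ω) : Set (Ω × Ω) := {p | p.1 = p.2 ∧ p.1 ∈ Δ}

/-- The number of points `γ` with `(p.1, γ) ∈ r` and `(γ, p.2) ∈ s`. -/
noncomputable def interNum (r s : Set (Ω × Ω)) (p : Ω × Ω) : ℕ :=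
  {γ : Ω | (p.1, γ) ∈ r ∧ (γ, p.2) ∈ s}.ncard

/-- A coherent configuration on `Ω`: a partition `S` of `Ω × Ω` such that the diagonal
is a union of classes, `S` is closed under transposition, and the intersection numbers
are well defined. -/
structure CoherentConfiguration (Ω : Type u) where
  S : Set (Set (Ω × Ω))
  isPartition : Setoid.IsPartition S
  diag_isRelation : ∃ T ⊆ S, ⋃₀ T = diagRel (Set.univ : Set Ω)
  swap_mem : ∀ s ∈ S, {p : Ω × Ω | (p.2, p.1) ∈ s} ∈ S
  coherent : ∀ r ∈ S, ∀ s ∈ S, ∀ t ∈ S, ∀ p ∈ t, ∀ q ∈ t,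
    interNum r s p = interNum r s q

namespace CoherentConfiguration

/-- A relation of `X` is a union of basis relations of `X`. -/
def IsRelation (X : CoherentConfiguration Ω) (r : Set (Ω × Ω)) : Prop :=
  ∃ T ⊆ X.S, ⋃₀ T = r

/-- A fiber of `X` is a set `Δ` with `1_Δ` a basis relation. -/
def IsFiber (X : CoherentConfiguration Ω) (Δ : Set Ω) : Prop :=
  diagRel Δ ∈ X.S

end CoherentConfiguration

/-- `X ≤ Y` iff every relation of `X` is a relation of `Y`. -/
def CCle (X Y : CoherentConfiguration Ω) : Prop :=
  ∀ r, X.IsRelation r → Y.IsRelation r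

/-- The arc set of a graph, as a set of ordered pairs. -/
def adjRel (G : SimpleGraph Ω) : Set (Ω × Ω) := {p | G.Adj p.1 p.2}

/-- `X = WL(G)`: the smallest coherent configuration having the arc set of `G`
among its relations. -/
def IsWL (G : SimpleGraph Ω) (X : CoherentConfiguration Ω) : Prop :=
  X.IsRelation (adjRel G) ∧
    ∀ Y : CoherentConfiguration Ω, Y.IsRelation (adjRel G) → CCle X Y

/-- `X = WL(G)_π`: the smallest coherent configuration having the arc set of `G`
and every `1_Δ`, `Δ ∈ π`, among its relations. -/
def IsWLPart (G : SimpleGraph Ω) (π : Set (Set Ω)) (X : CoherentConfiguration Ω) : Prop :=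
  X.IsRelation (adjRel G) ∧ (∀ Δ ∈ π, X.IsRelation (diagRel Δ)) ∧
    ∀ Y : CoherentConfiguration Ω, Y.IsRelation (adjRel G) →
      (∀ Δ ∈ π, Y.IsRelation (diagRel Δ)) → CCle X Y

/-- A graph is distance-hereditary if in every connected induced subgraph the distance
function is the same as in the graph itself. -/
def DistanceHereditary {V : Type*} (G : SimpleGraph V) : Prop :=
  ∀ s : Set V, (G.induce s).Connected →
    ∀ u v : s, (G.induce s).dist u v = G.dist u.1 v.1

/-- Two vertices are twins in a graph if every other vertex is adjacent to both
or to neither. -/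
def IsTwin (G : SimpleGraph Ω) (a b : Ω) : Prop :=
  ∀ γ, γ ≠ a → γ ≠ b → (G.Adj γ a ↔ G.Adj γ b)

/-- Two points are `X`-twins if for every other point `γ`, the basis relation containing
`(γ, a)` coincides with the one containing `(γ, b)`. -/
def XTwin (X : CoherentConfiguration Ω) (a b : Ω) : Prop :=
  ∀ γ, γ ≠ a → γ ≠ b → ∀ s ∈ X.S, ((γ, a) ∈ s ↔ (γ, b) ∈ s)

/-- The relation `e_X` of being `X`-twins, as a set of pairs. -/
def twinRel (X : CoherentConfiguration Ω) : Set (Ω × Ω) := {p | XTwin X p.1 p.2}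

/-- An equivalence relation on `Ω`, given as a set of pairs. -/
def IsEquivSet (e : Set (Ω × Ω)) : Prop :=
  (∀ a, (a, a) ∈ e) ∧ (∀ a b, (a, b) ∈ e → (b, a) ∈ e) ∧
    (∀ a b c, (a, b) ∈ e → (b, c) ∈ e → (a, c) ∈ e)

/-- A parabolic of `X` is an equivalence relation which is a relation of `X`. -/
def IsParabolic (X : CoherentConfiguration Ω) (e : Set (Ω × Ω)) : Prop :=
  IsEquivSet e ∧ X.IsRelation e

/-- The dot product (composition) of two relations. -/
def relComp (r s : Set (Ω × Ω)) : Set (Ω × Ω) :=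
  {p | ∃ c, (p.1, c) ∈ r ∧ (c, p.2) ∈ s}

/-- An algebraic isomorphism between coherent configurations: a bijection between the
sets of basis relations preserving the intersection numbers. -/
structure AlgIso {Ω : Type u} {Ω' : Type v} (X : CoherentConfiguration Ω)
    (X' : CoherentConfiguration Ω') where
  toFun : Set (Ω × Ω) → Set (Ω' × Ω')
  bijOn : Set.BijOn toFun X.S X'.S
  card_eq : ∀ r ∈ X.S, ∀ s ∈ X.S, ∀ t ∈ X.S, ∀ p ∈ t, ∀ p' ∈ toFun t,
      interNum r s p = interNum (toFun r) (toFun s) p'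

/-- `X` is separable: every algebraic isomorphism from `X` to another coherent
configuration is induced by a bijection of the point sets. -/
def CCSeparable {Ω : Type u} (X : CoherentConfiguration Ω) : Prop :=
  ∀ (Ω' : Type u), Finite Ω' → ∀ (X' : CoherentConfiguration Ω') (φ : AlgIso X X'),
    ∃ f : Ω → Ω', Function.Bijective f ∧ ∀ s ∈ X.S, φ.toFun s = Prod.map f f '' s

/-- `Ω₋(m)`. -/
def OmegaMinus (m : Set (Ω × Ω)) : Set Ω := {a | ∃ b, (a, b) ∈ m}

/-- `Ω₊(m)`. -/
def OmegaPlus (m : Set (Ω × Ω)) : Set Ω := {b | ∃ a, (a, b) ∈ m}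

/-- A matching of `X`: an irreflexive basis relation of valency one in both directions. -/
def IsMatchingCC (X : CoherentConfiguration Ω) (m : Set (Ω × Ω)) : Prop :=
  m ∈ X.S ∧ (∀ p ∈ m, p.1 ≠ p.2) ∧
    (∀ a b c, (a, b) ∈ m → (a, c) ∈ m → b = c) ∧
    (∀ a b c, (a, c) ∈ m → (b, c) ∈ m → a = b)

/-- A pendant matching of `X` with respect to the graph `G`. -/
def IsPendantMatching (G : SimpleGraph Ω) (X : CoherentConfiguration Ω)
    (m : Set (Ω × Ω)) : Prop :=
  IsMatchingCC X m ∧ OmegaMinus m ≠ OmegaPlus m ∧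
    ∀ p ∈ m, G.Adj p.1 p.2 ∧ ∀ c, G.Adj p.1 c → c = p.2

/-- A twin matching of `X` with respect to the graph `G`. -/
def IsTwinMatching (G : SimpleGraph Ω) (X : CoherentConfiguration Ω)
    (m : Set (Ω × Ω)) : Prop :=
  IsMatchingCC X m ∧ OmegaMinus m ≠ OmegaPlus m ∧ ∀ p ∈ m, IsTwin G p.1 p.2

/-- The quotient graph of `G` modulo a (twin) equivalence relation `r`: two distinct
classes are adjacent iff every vertex of one is adjacent to every vertex of the other. -/
def quotGraph (G : SimpleGraph Ω) (r : Ω → Ω → Prop) : SimpleGraph (Quot r) where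
  Adj c d := c ≠ d ∧ ∀ a b : Ω, Quot.mk r a = c → Quot.mk r b = d → G.Adj a b
  symm := ⟨fun _ _ h => ⟨h.1.symm, fun a b ha hb => (h.2 b a hb ha).symm⟩⟩
  loopless := ⟨fun _ h => h.1 rfl⟩

/-- The restriction of a relation on `Ω` to the complement of `Δ`. -/
def restrictRel (Δ : Set Ω) (s : Set (Ω × Ω)) : Set (↥(Δᶜ) × ↥(Δᶜ)) :=
  {p | ((p.1 : Ω), (p.2 : Ω)) ∈ s}

/-- The restriction of a subset of `Ω` to the complement of `Δ`. -/
def restrictSet (Δ Γ : Set Ω) : Set ↥(Δᶜ) := {x | (x : Ω) ∈ Γ}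

/-
For `α ≠ β`, the points `γ` that see `α` and `β` through the same basis relation form a subset
of `Ω ∖ {α, β}`, so `α, β` are twins iff there are at least `|Ω| - 2` of them; for `α = β`
this count is `|Ω|`. The count at a pair in the basis relation `t` is `∑_r c^t_{r r*}`, and
`|Ω| = ∑_{r,s} c^t_{rs}`, so both are preserved by an algebraic isomorphism once it is known
to commute with transposition. That in turn follows from the fact that it maps reflexive basis
relations to reflexive ones, since these are the `e` with `c^e_{ee} > 0` and valency at most one.
-/

lemma interNum_pos [Finite Ω] {r s : Set (Ω × Ω)} {p : Ω × Ω} :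
    0 < interNum r s p ↔ ∃ γ, (p.1, γ) ∈ r ∧ (γ, p.2) ∈ s :=
  ncard_pos

namespace CoherentConfiguration

variable (X : CoherentConfiguration Ω)

lemma eq_of_mem_of_mem {s t : Set (Ω × Ω)} (hs : s ∈ X.S) (ht : t ∈ X.S) {p : Ω × Ω}
    (hps : p ∈ s) (hpt : p ∈ t) : s = t := by
  obtain ⟨u, -, hu⟩ := X.isPartition.2 p
  rw [hu s ⟨hs, hps⟩, hu t ⟨ht, hpt⟩]

lemma nonempty_of_mem {s : Set (Ω × Ω)} (hs : s ∈ X.S) : s.Nonempty :=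
  nonempty_iff_ne_empty.2 fun h => X.isPartition.1 (h ▸ hs)

noncomputable def basisOf (p : Ω × Ω) : Set (Ω × Ω) :=
  (X.isPartition.2 p).exists.choose

lemma basisOf_mem (p : Ω × Ω) : X.basisOf p ∈ X.S :=
  (X.isPartition.2 p).exists.choose_spec.1

lemma mem_basisOf (p : Ω × Ω) : p ∈ X.basisOf p :=
  (X.isPartition.2 p).exists.choose_spec.2

lemma mem_iff_basisOf_eq {s : Set (Ω × Ω)} (hs : s ∈ X.S) {p : Ω × Ω} :
    p ∈ s ↔ X.basisOf p = s :=
  ⟨X.eq_of_mem_of_mem (X.basisOf_mem p) hs (X.mem_basisOf p), fun h => h ▸ X.mem_basisOf p⟩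

lemma subset_diagRel_of_mem {s : Set (Ω × Ω)} (hs : s ∈ X.S) {a : Ω} (ha : (a, a) ∈ s) :
    s ⊆ diagRel univ := by
  obtain ⟨T, hTS, hT⟩ := X.diag_isRelation
  obtain ⟨u, huT, hau⟩ : (a, a) ∈ ⋃₀ T := hT ▸ ⟨rfl, trivial⟩
  rw [X.eq_of_mem_of_mem hs (hTS huT) ha hau, ← hT]
  exact subset_sUnion_of_mem huT

lemma eq_of_basisOf_eq_basisOf_diag {a b c : Ω} (h : X.basisOf (a, a) = X.basisOf (b, c)) :
    b = c :=
  (X.subset_diagRel_of_mem (X.basisOf_mem _) (X.mem_basisOf (a, a))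
    (h ▸ X.mem_basisOf (b, c))).1

lemma swap_preimage_mem {s : Set (Ω × Ω)} (hs : s ∈ X.S) : Prod.swap ⁻¹' s ∈ X.S :=
  X.swap_mem s hs

lemma basisOf_swap (a b : Ω) : X.basisOf (b, a) = Prod.swap ⁻¹' X.basisOf (a, b) :=
  (X.mem_iff_basisOf_eq (X.swap_preimage_mem (X.basisOf_mem (a, b)))).1 (X.mem_basisOf (a, b))

lemma xTwin_iff {a b : Ω} :
    XTwin X a b ↔ ∀ γ, γ ≠ a → γ ≠ b → X.basisOf (γ, a) = X.basisOf (γ, b) := by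
  refine forall₃_congr fun γ _ _ => ⟨fun h => ?_, fun h s hs => ?_⟩
  · exact (X.mem_iff_basisOf_eq (X.basisOf_mem _)).1
      ((h _ (X.basisOf_mem _)).2 (X.mem_basisOf _))
  · rw [X.mem_iff_basisOf_eq hs, X.mem_iff_basisOf_eq hs, h]

lemma xTwin_iff_card_sub_two_le [Finite Ω] {a b : Ω} :
    XTwin X a b ↔ Nat.card Ω - 2 ≤ {γ | X.basisOf (γ, a) = X.basisOf (γ, b)}.ncard := by
  rcases eq_or_ne a b with rfl | hab
  · simp [xTwin_iff]
  have hsub : {γ | X.basisOf (γ, a) = X.basisOf (γ, b)} ⊆ {a, b}ᶜ := by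
    rintro γ hγ (rfl | rfl)
    · exact hab (X.eq_of_basisOf_eq_basisOf_diag hγ)
    · exact hab (X.eq_of_basisOf_eq_basisOf_diag hγ.symm).symm
  rw [xTwin_iff, ← ncard_pair hab, ← ncard_compl]
  refine ⟨fun h => ncard_le_ncard fun γ hγ => ?_, fun h γ ha hb => ?_⟩
  · simp only [mem_compl_iff, mem_insert_iff, mem_singleton_iff, not_or] at hγ
    exact h γ hγ.1 hγ.2
  · have hγ : γ ∈ ({a, b}ᶜ : Set Ω) := by simp [ha, hb]
    rw [← eq_of_subset_of_ncard_le hsub h] at hγ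
    exact hγ

open Classical in
lemma ncard_basisOf_eq_sum [Finite Ω] (P : Set (Ω × Ω) → Set (Ω × Ω) → Prop) (p : Ω × Ω) :
    {γ | P (X.basisOf (p.1, γ)) (X.basisOf (γ, p.2))}.ncard =
      ∑ r ∈ X.S.toFinite.toFinset, ∑ s ∈ X.S.toFinite.toFinset,
        if P r s then interNum r s p else 0 := by
  have := Fintype.ofFinite Ω
  rw [← Finset.sum_product' (f := fun r s => if P r s then interNum r s p else 0),
    ← Finset.sum_filter, ncard_eq_toFinset_card', toFinset_ofPred]
  refine (Finset.card_eq_sum_card_fiberwise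
    (f := fun γ => (X.basisOf (p.1, γ), X.basisOf (γ, p.2))) fun γ hγ => ?_).trans
    (Finset.sum_congr rfl fun rs hrs => ?_)
  · simp_all [basisOf_mem]
  · simp only [Finset.mem_filter, Finset.mem_product, Finite.mem_toFinset] at hrs
    rw [interNum, ncard_eq_toFinset_card', toFinset_ofPred]
    congr 1
    ext γ
    simp only [Finset.mem_filter, Finset.mem_univ, true_and, Prod.ext_iff,
      X.mem_iff_basisOf_eq hrs.1.1, X.mem_iff_basisOf_eq hrs.1.2]
    exact ⟨And.right, fun h => ⟨h.1 ▸ h.2 ▸ hrs.2, h⟩⟩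

lemma subset_diagRel_iff [Finite Ω] {e : Set (Ω × Ω)} (he : e ∈ X.S) :
    e ⊆ diagRel univ ↔
      ∀ p ∈ e, 0 < interNum e e p ∧ {γ | X.basisOf (p.1, γ) = e}.ncard ≤ 1 := by
  refine ⟨fun hdiag => ?_, fun h => ?_⟩
  · rintro ⟨a, b⟩ hab
    obtain rfl : a = b := (hdiag hab).1
    refine ⟨interNum_pos.2 ⟨a, hab, hab⟩, (ncard_le_one).2 fun γ hγ δ hδ => ?_⟩
    rw [mem_ofPred_eq, ← X.mem_iff_basisOf_eq he] at hγ hδ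
    exact (hdiag hγ).1.symm.trans (hdiag hδ).1
  · obtain ⟨⟨a, b⟩, hab⟩ := X.nonempty_of_mem he
    obtain ⟨hpos, hval⟩ := h _ hab
    obtain ⟨γ, haγ, hγb⟩ := interNum_pos.1 hpos
    -- `e` has valency at most one, so the path `a → γ → b` has `γ = b` and `e` contains a loop
    obtain rfl : γ = b := (ncard_le_one).1 hval γ ((X.mem_iff_basisOf_eq he).1 haγ) b
      ((X.mem_iff_basisOf_eq he).1 hab)
    exact X.subset_diagRel_of_mem he hγb

end CoherentConfiguration

namespace AlgIso

variable {Ω' : Type*} {X : CoherentConfiguration Ω} {X' : CoherentConfiguration Ω'}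
  (φ : AlgIso X X')

lemma toFinset_S_eq_image [Finite Ω] [Finite Ω'] [DecidableEq (Set (Ω' × Ω'))] :
    X'.S.toFinite.toFinset = X.S.toFinite.toFinset.image φ.toFun := by
  ext
  simp [← φ.bijOn.image_eq]

lemma ncard_basisOf_eq [Finite Ω] [Finite Ω'] {P : Set (Ω × Ω) → Set (Ω × Ω) → Prop}
    {P' : Set (Ω' × Ω') → Set (Ω' × Ω') → Prop}
    (hP : ∀ r ∈ X.S, ∀ s ∈ X.S, P' (φ.toFun r) (φ.toFun s) ↔ P r s)
    {t : Set (Ω × Ω)} (ht : t ∈ X.S) {p : Ω × Ω} (hp : p ∈ t) {p' : Ω' × Ω'}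
    (hp' : p' ∈ φ.toFun t) :
    {γ | P' (X'.basisOf (p'.1, γ)) (X'.basisOf (γ, p'.2))}.ncard =
      {γ | P (X.basisOf (p.1, γ)) (X.basisOf (γ, p.2))}.ncard := by
  classical
  have hinj : InjOn φ.toFun X.S.toFinite.toFinset := by
    simpa using φ.bijOn.injOn
  rw [X.ncard_basisOf_eq_sum, X'.ncard_basisOf_eq_sum, φ.toFinset_S_eq_image,
    Finset.sum_image hinj]
  refine Finset.sum_congr rfl fun r hr => ?_
  rw [Finset.sum_image hinj]
  refine Finset.sum_congr rfl fun s hs => ?_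
  rw [Finite.mem_toFinset] at hr hs
  rw [← φ.card_eq r hr s hs t ht p hp p' hp']
  exact if_congr (hP r hr s hs) rfl rfl

lemma map_subset_diagRel_iff [Finite Ω] [Finite Ω'] {e : Set (Ω × Ω)} (he : e ∈ X.S) :
    φ.toFun e ⊆ diagRel univ ↔ e ⊆ diagRel univ := by
  have he' := φ.bijOn.mapsTo he
  have key : ∀ p ∈ e, ∀ p' ∈ φ.toFun e,
      (0 < interNum (φ.toFun e) (φ.toFun e) p' ∧
        {γ | X'.basisOf (p'.1, γ) = φ.toFun e}.ncard ≤ 1) ↔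
      (0 < interNum e e p ∧ {γ | X.basisOf (p.1, γ) = e}.ncard ≤ 1) := by
    intro p hp p' hp'
    have hval := φ.ncard_basisOf_eq (P := fun r _ => r = e) (P' := fun r _ => r = φ.toFun e)
      (fun r hr _ _ => φ.bijOn.injOn.eq_iff hr he) he hp hp'
    rw [← φ.card_eq e he e he e he p hp p' hp', hval]
  rw [X.subset_diagRel_iff he, X'.subset_diagRel_iff he']
  obtain ⟨p, hp⟩ := X.nonempty_of_mem he
  obtain ⟨p', hp'⟩ := X'.nonempty_of_mem he'
  exact ⟨fun h q hq => (key q hq p' hp').1 (h p' hp'),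
    fun h q' hq' => (key p hp q' hq').2 (h p hp)⟩

lemma map_swap [Finite Ω] [Finite Ω'] {s : Set (Ω × Ω)} (hs : s ∈ X.S) :
    φ.toFun (Prod.swap ⁻¹' s) = Prod.swap ⁻¹' φ.toFun s := by
  obtain ⟨⟨a, b⟩, hab⟩ := X.nonempty_of_mem hs
  have he := X.basisOf_mem (a, a)
  obtain ⟨p', hp'⟩ := X'.nonempty_of_mem (φ.bijOn.mapsTo he)
  have hpos : 0 < interNum s (Prod.swap ⁻¹' s) (a, a) := interNum_pos.2 ⟨b, hab, hab⟩
  rw [φ.card_eq s hs _ (X.swap_preimage_mem hs) _ he _ (X.mem_basisOf _) p' hp'] at hpos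
  obtain ⟨γ, h1, h2⟩ := interNum_pos.1 hpos
  have hp'_diag : p'.1 = p'.2 :=
    ((φ.map_subset_diagRel_iff he).2 (X.subset_diagRel_of_mem he (X.mem_basisOf _)) hp').1
  rw [hp'_diag] at h1
  exact X'.eq_of_mem_of_mem (φ.bijOn.mapsTo (X.swap_preimage_mem hs))
    (X'.swap_preimage_mem (φ.bijOn.mapsTo hs)) h2 h1

lemma mem_twinRel_iff [Finite Ω] [Finite Ω'] {t : Set (Ω × Ω)} (ht : t ∈ X.S) {p : Ω × Ω}
    (hp : p ∈ t) {p' : Ω' × Ω'} (hp' : p' ∈ φ.toFun t) :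
    p' ∈ twinRel X' ↔ p ∈ twinRel X := by
  have hcard : Nat.card Ω' = Nat.card Ω := by
    simpa using φ.ncard_basisOf_eq (P := fun _ _ => True) (P' := fun _ _ => True)
      (fun _ _ _ _ => Iff.rfl) ht hp hp'
  have hsame := φ.ncard_basisOf_eq (P := fun r s => Prod.swap ⁻¹' r = s)
    (P' := fun r s => Prod.swap ⁻¹' r = s)
    (fun r hr s hs => by
      rw [← φ.map_swap hr, φ.bijOn.injOn.eq_iff (X.swap_preimage_mem hr) hs])
    ht hp hp'
  simp only [← X.basisOf_swap, ← X'.basisOf_swap] at hsame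
  simp only [twinRel, mem_ofPred_eq, X.xTwin_iff_card_sub_two_le, X'.xTwin_iff_card_sub_two_le,
    hcard, hsame]

end AlgIso

/-- An algebraic isomorphism maps the twin parabolic of `X` onto the twin
parabolic of `X'` (where `φ` is extended to relations by taking unions of the images of
the basis relations involved). -/
theorem stmt_9 {Ω : Type u} {Ω' : Type v} [Fintype Ω] [Fintype Ω']
    (X : CoherentConfiguration Ω) (X' : CoherentConfiguration Ω')
    (φ : AlgIso X X') :
    ⋃₀ (φ.toFun '' {s | s ∈ X.S ∧ s ⊆ twinRel X}) = twinRel X' := by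
  ext q'
  simp only [mem_sUnion, mem_image, mem_ofPred_eq]
  constructor
  · rintro ⟨_, ⟨s, ⟨hs, hs_twin⟩, rfl⟩, hq'⟩
    obtain ⟨p, hp⟩ := X.nonempty_of_mem hs
    exact (φ.mem_twinRel_iff hs hp hq').2 (hs_twin hp)
  · intro hq'
    obtain ⟨t, ht, hφt⟩ := φ.bijOn.surjOn (X'.basisOf_mem q')
    have hq't : q' ∈ φ.toFun t := hφt ▸ X'.mem_basisOf q'
    exact ⟨_, ⟨t, ⟨ht, fun p hp => (φ.mem_twinRel_iff ht hp hq't).1 hq'⟩, rfl⟩, hq't⟩
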